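/- arXiv:1205.4455 — 5 statements merged into one kernel-verified Lean document; each statement's English description precedes it below -/
import Mathlib

section
/- Let G be a finitely generated group and let g be an element of the center of G whose image in the abelianization G/[G,G] has infinite order. Then there exist a finite-index subgroup H of G containing g, a subgroup K of H, and a group isomorphism e : H ≅ ℤ × K such that e(g) = (1, 1), i.e. g corresponds to the generator of the ℤ factor. -/
open Multiplicative

/-- A finitely generated commutative group admits a homomorphism to `ℤ` which is
nontrivial on any given non-torsion element. -/
lemma exists_hom_to_int {A : Type*} [CommGroup A] [Group.FG A] (a : A)
    (ha : ¬ IsOfFinOrder a) : ∃ φ : A →* Multiplicative ℤ, φ a ≠ 1 := by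
  haveI : AddGroup.FG (Additive A) := GroupFG.iff_add_fg.mp ‹_›
  haveI : Module.Finite ℤ (Additive A) := Module.Finite.iff_addGroup_fg.mpr ‹_›
  set T := Submodule.torsion ℤ (Additive A)
  haveI : Module.Free ℤ (Additive A ⧸ T) := Module.free_of_finite_type_torsion_free'
  set b := Module.Free.chooseBasis ℤ (Additive A ⧸ T)
  set x : Additive A ⧸ T := T.mkQ (Additive.ofMul a)
  have hx : x ≠ 0 := by
    intro h
    have h' : Additive.ofMul a ∈ T := (Submodule.Quotient.mk_eq_zero T).mp h
    obtain ⟨⟨n, hn⟩, hna⟩ := h'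
    apply ha
    rw [← isOfFinAddOrder_ofMul_iff, isOfFinAddOrder_iff_zsmul_eq_zero]
    exact ⟨n, mem_nonZeroDivisors_iff_ne_zero.mp hn, hna⟩
  have : ∃ i, b.repr x i ≠ 0 := by
    by_contra h
    push_neg at h
    apply hx
    apply b.repr.injective
    ext i
    simp [h i]
  obtain ⟨i, hi⟩ := this
  set ψ : Additive A →ₗ[ℤ] ℤ := (b.coord i).comp T.mkQ
  refine ⟨MonoidHom.mk' (fun z => Multiplicative.ofAdd (ψ (Additive.ofMul z))) ?_, ?_⟩
  · intro z w
    simp [← ofAdd_add, map_add]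
  · simp only [MonoidHom.mk'_apply, ne_eq, ofAdd_eq_one]
    exact hi

/-- If `G` is a finitely generated group and `g` is a central element whose image in the
abelianization has infinite order, then some finite-index subgroup `H ≤ G` containing `g`
splits as `ℤ × K` with `g` corresponding to the generator of the `ℤ` factor. -/
theorem centralizer_virtually_splits (G : Type*) [Group G] [Group.FG G] (g : G)
    (hg : g ∈ Subgroup.center G)
    (hord : ¬ IsOfFinOrder (Abelianization.of g)) :
    ∃ H : Subgroup G, H.FiniteIndex ∧
      ∃ (hgH : g ∈ H) (K : Subgroup H) (e : H ≃* Multiplicative ℤ × K),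
        e ⟨g, hgH⟩ = (Multiplicative.ofAdd 1, 1) := by
  haveI : Group.FG (Abelianization G) := QuotientGroup.fg (commutator G)
  obtain ⟨φ, hφ⟩ := exists_hom_to_int (Abelianization.of g) hord
  set ψ : G →* Multiplicative ℤ := φ.comp Abelianization.of with hψdef
  set n : ℤ := (ψ g).toAdd with hn
  have hn0 : n ≠ 0 := by
    simpa [hn, hψdef, toAdd_eq_zero] using hφ
  haveI : NeZero n.natAbs := ⟨Int.natAbs_ne_zero.mpr hn0⟩
  set f : G →* Multiplicative (ZMod n.natAbs) :=
    (AddMonoidHom.toMultiplicative (Int.castAddHom (ZMod n.natAbs))).comp ψ with hfdef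
  set H : Subgroup G := f.ker with hHdef
  have memH : ∀ x : G, x ∈ H ↔ n ∣ (ψ x).toAdd := by
    intro x
    rw [hHdef, MonoidHom.mem_ker, hfdef]
    have : ((AddMonoidHom.toMultiplicative (Int.castAddHom (ZMod n.natAbs))).comp ψ) x
        = Multiplicative.ofAdd (((ψ x).toAdd : ZMod n.natAbs)) := rfl
    rw [this, ofAdd_eq_one, ZMod.intCast_zmod_eq_zero_iff_dvd, Int.natAbs_dvd]
  have hgH : g ∈ H := (memH g).mpr ⟨1, by simp [hn]⟩
  haveI : Finite f.range := Subgroup.instFiniteSubtypeMem _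
  refine ⟨H, Subgroup.finiteIndex_ker f, hgH, ?_⟩
  -- the rescaled homomorphism χ : H →* ℤ with χ g = 1
  have key : ∀ x y : ℤ, n ∣ x → n ∣ y → (x + y) / n = x / n + y / n := by
    rintro _ _ ⟨p, rfl⟩ ⟨q, rfl⟩
    rw [← mul_add, Int.mul_ediv_cancel_left _ hn0, Int.mul_ediv_cancel_left _ hn0,
      Int.mul_ediv_cancel_left _ hn0]
  set χ : H →* Multiplicative ℤ := MonoidHom.mk'
    (fun h => Multiplicative.ofAdd ((ψ (h : G)).toAdd / n))
    (by
      intro h₁ h₂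
      show ofAdd (toAdd (ψ ((h₁ * h₂ : H) : G)) / n)
        = ofAdd (toAdd (ψ (h₁ : G)) / n) * ofAdd (toAdd (ψ (h₂ : G)) / n)
      have hmul : toAdd (ψ ((h₁ * h₂ : H) : G)) = toAdd (ψ (h₁ : G)) + toAdd (ψ (h₂ : G)) := by
        rw [Subgroup.coe_mul, map_mul, toAdd_mul]
      rw [hmul, key _ _ ((memH _).mp h₁.2) ((memH _).mp h₂.2), ofAdd_add]) with hχdef
  set gH : H := ⟨g, hgH⟩ with hgHdef
  have hχg : χ gH = Multiplicative.ofAdd 1 := by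
    simp only [hχdef, MonoidHom.mk'_apply, hgHdef]
    rw [← hn, Int.ediv_self hn0]
  have hc : ∀ x : G, x * g = g * x := Subgroup.mem_center_iff.mp hg
  have hcomm : ∀ (m : ℤ) (h : H), gH ^ m * h = h * gH ^ m := by
    intro m h
    have hC : Commute gH h := Subtype.ext ((hc (h : G)).symm)
    exact (hC.zpow_left m).eq
  refine ⟨χ.ker, ?_⟩
  have memK : ∀ h : H, gH ^ (-(χ h).toAdd) * h ∈ χ.ker := by
    intro h
    rw [MonoidHom.mem_ker, map_mul, map_zpow, hχg]
    rw [← ofAdd_zsmul]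
    simp
  refine ⟨⟨⟨fun h => (χ h, ⟨gH ^ (-(χ h).toAdd) * h, memK h⟩),
      fun p => gH ^ (p.1.toAdd) * (p.2 : H), ?_, ?_⟩, ?_⟩, ?_⟩
  · -- left inverse
    intro h
    show gH ^ (χ h).toAdd * (gH ^ (-(χ h).toAdd) * h) = h
    rw [← mul_assoc, ← zpow_add, add_neg_cancel, zpow_zero, one_mul]
  · -- right inverse
    rintro ⟨k, x⟩
    have hx : χ (x : H) = 1 := x.2
    have hval : χ (gH ^ k.toAdd * (x : H)) = k := by
      rw [map_mul, map_zpow, hχg, hx, mul_one, ← ofAdd_zsmul, smul_eq_mul, mul_one,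
        ofAdd_toAdd]
    refine Prod.ext hval (Subtype.ext (Subtype.ext ?_))
    show ((gH ^ (-(χ (gH ^ k.toAdd * (x : H))).toAdd) * (gH ^ k.toAdd * (x : H)) : H) : G)
      = ((x : H) : G)
    rw [hval, ← mul_assoc, ← zpow_add, neg_add_cancel, zpow_zero, one_mul]
  · -- map_mul
    intro h₁ h₂
    refine Prod.ext (map_mul χ h₁ h₂) (Subtype.ext (Subtype.ext ?_))
    show ((gH ^ (-(χ (h₁ * h₂)).toAdd) * (h₁ * h₂) : H) : G)
      = (((gH ^ (-(χ h₁).toAdd) * h₁) * (gH ^ (-(χ h₂).toAdd) * h₂) : H) : G)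
    have : (gH ^ (-(χ h₁).toAdd) * h₁) * (gH ^ (-(χ h₂).toAdd) * h₂)
        = gH ^ (-(χ (h₁ * h₂)).toAdd) * (h₁ * h₂) := by
      rw [mul_assoc, ← mul_assoc h₁, ← hcomm, mul_assoc, ← mul_assoc, ← zpow_add, map_mul,
        toAdd_mul, neg_add]
    rw [this]
  · -- value at g
    have h1 : χ gH = Multiplicative.ofAdd 1 := hχg
    refine Prod.ext h1 (Subtype.ext (Subtype.ext ?_))
    show ((gH ^ (-(χ gH).toAdd) * gH : H) : G) = ((1 : χ.ker) : H)
    rw [h1]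
    simp
end

section
/- Let n ≥ 1 and C, C₁ > 0. Let f, g : ℝⁿ → ℝ satisfy |g(x) − g(y)| ≤ C(‖x − y‖² + |f(x)| + |f(y)|) for all x, y ∈ ℝⁿ. Let z, z′ ∈ ℝⁿ with ‖z − z′‖ ≤ 1 and suppose that |f(x)| ≤ C₁‖x − z‖^{2n} for every x on the segment [z, z′]. Then |g(z) − g(z′)| ≤ 2C(1 + 2C₁)·‖z − z′‖^{n+1}. -/
set_option maxHeartbeats 1000000 in
/-- The chaining estimate in the proof of Lemma 3.3: if
`|g x − g y| ≤ C(‖x − y‖² + |f x| + |f y|)` everywhere, `‖z − z'‖ ≤ 1`, and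
`|f x| ≤ C₁ ‖x − z‖^{2n}` on the segment `[z, z']`, then
`|g z − g z'| ≤ 2C(1 + 2C₁) ‖z − z'‖^{n+1}`. -/
theorem chaining_estimate (n : ℕ) (hn : 1 ≤ n) (C C₁ : ℝ) (hC : 0 < C) (hC₁ : 0 < C₁)
    (f g : EuclideanSpace ℝ (Fin n) → ℝ)
    (hg : ∀ x y : EuclideanSpace ℝ (Fin n),
      |g x - g y| ≤ C * (‖x - y‖ ^ 2 + |f x| + |f y|))
    (z z' : EuclideanSpace ℝ (Fin n)) (hzz' : ‖z - z'‖ ≤ 1)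
    (hf : ∀ x ∈ segment ℝ z z', |f x| ≤ C₁ * ‖x - z‖ ^ (2 * n)) :
    |g z - g z'| ≤ 2 * C * (1 + 2 * C₁) * ‖z - z'‖ ^ (n + 1) := by
  set d : ℝ := ‖z - z'‖ with hd
  rcases eq_or_lt_of_le (norm_nonneg (z - z')) with h0 | hd0
  · have hz : z = z' := sub_eq_zero.mp (norm_eq_zero.mp h0.symm)
    subst hz
    simp only [sub_self, abs_zero]
    positivity
  set m := n - 1 with hm
  have hnm : m + 1 = n := Nat.succ_pred_eq_of_pos hn
  have hinv : 1 ≤ 1 / d := (le_div_iff₀ hd0).mpr (by simpa using hzz')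
  set x : ℝ := (1 / d) ^ m with hx
  have hx1 : 1 ≤ x := one_le_pow₀ hinv
  have hx0 : 0 < x := lt_of_lt_of_le one_pos hx1
  set N : ℕ := ⌈x⌉₊ with hN
  have hNx : x ≤ N := Nat.le_ceil x
  have hNpos : (0 : ℝ) < N := lt_of_lt_of_le hx0 hNx
  have hN2x : (N : ℝ) ≤ 2 * x := by
    have := Nat.ceil_lt_add_one hx0.le
    linarith
  -- the chain points
  set p : ℕ → EuclideanSpace ℝ (Fin n) := fun k => z + ((k : ℝ) / N) • (z' - z) with hp
  have hp0 : p 0 = z := by simp [hp]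
  have hpN : p N = z' := by
    simp only [hp, div_self hNpos.ne']
    simp
  have hratio : ∀ k : ℕ, k ≤ N → (k : ℝ) / N ∈ Set.Icc (0:ℝ) 1 := by
    intro k hk
    constructor
    · positivity
    · exact div_le_one_of_le₀ (by exact_mod_cast hk) hNpos.le
  have hseg : ∀ k : ℕ, k ≤ N → p k ∈ segment ℝ z z' := by
    intro k hk
    rw [segment_eq_image']
    exact ⟨(k : ℝ) / N, hratio k hk, rfl⟩
  have hdist : ∀ k : ℕ, k ≤ N → ‖p k - z‖ ≤ d := by
    intro k hk
    have : p k - z = ((k : ℝ) / N) • (z' - z) := by simp [hp]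
    rw [this, norm_smul]
    have h1 : ‖z' - z‖ = d := by rw [hd, norm_sub_rev]
    rw [h1]
    have := hratio k hk
    calc ‖(k : ℝ) / N‖ * d = ((k : ℝ) / N) * d := by
          rw [Real.norm_eq_abs, abs_of_nonneg this.1]
      _ ≤ 1 * d := by
          apply mul_le_mul_of_nonneg_right this.2 hd0.le
      _ = d := one_mul d
  have hfb : ∀ k : ℕ, k ≤ N → |f (p k)| ≤ C₁ * d ^ (2 * n) := by
    intro k hk
    calc |f (p k)| ≤ C₁ * ‖p k - z‖ ^ (2 * n) := hf _ (hseg k hk)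
      _ ≤ C₁ * d ^ (2 * n) := by
          apply mul_le_mul_of_nonneg_left _ hC₁.le
          exact pow_le_pow_left₀ (norm_nonneg _) (hdist k hk) _
  have hstepnorm : ∀ k : ℕ, ‖p k - p (k + 1)‖ = d / N := by
    intro k
    have : p k - p (k + 1) = (((k : ℝ) / N) - ((k + 1 : ℕ) : ℝ) / N) • (z' - z) := by
      simp only [hp, add_sub_add_left_eq_sub, sub_smul]
    rw [this, norm_smul]
    have h1 : ‖z' - z‖ = d := by rw [hd, norm_sub_rev]
    have h2 : ((k : ℝ) / N) - ((k + 1 : ℕ) : ℝ) / N = -(1 / N) := by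
      push_cast
      ring
    rw [h1, h2, norm_neg]
    rw [Real.norm_eq_abs, abs_of_nonneg (by positivity)]
    ring
  have hstep : ∀ k ∈ Finset.range N,
      |g (p k) - g (p (k + 1))| ≤ C * ((d / N) ^ 2 + C₁ * d ^ (2 * n) + C₁ * d ^ (2 * n)) := by
    intro k hk
    rw [Finset.mem_range] at hk
    calc |g (p k) - g (p (k + 1))|
        ≤ C * (‖p k - p (k + 1)‖ ^ 2 + |f (p k)| + |f (p (k + 1))|) := hg _ _
      _ ≤ C * ((d / N) ^ 2 + C₁ * d ^ (2 * n) + C₁ * d ^ (2 * n)) := by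
          apply mul_le_mul_of_nonneg_left _ hC.le
          rw [hstepnorm k]
          have := hfb k hk.le
          have := hfb (k + 1) hk
          linarith
  have htel : g z - g z' = ∑ k ∈ Finset.range N, (g (p k) - g (p (k + 1))) := by
    rw [Finset.sum_range_sub' (fun k => g (p k)) N, hp0, hpN]
  have hsum : |g z - g z'| ≤ (N : ℝ) * (C * ((d / N) ^ 2 + C₁ * d ^ (2 * n) + C₁ * d ^ (2 * n))) := by
    rw [htel]
    calc |∑ k ∈ Finset.range N, (g (p k) - g (p (k + 1)))|
        ≤ ∑ k ∈ Finset.range N, |g (p k) - g (p (k + 1))| := Finset.abs_sum_le_sum_abs _ _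
      _ ≤ ∑ _k ∈ Finset.range N, C * ((d / N) ^ 2 + C₁ * d ^ (2 * n) + C₁ * d ^ (2 * n)) :=
          Finset.sum_le_sum hstep
      _ = (N : ℝ) * (C * ((d / N) ^ 2 + C₁ * d ^ (2 * n) + C₁ * d ^ (2 * n))) := by
          rw [Finset.sum_const, Finset.card_range, nsmul_eq_mul]
  -- arithmetic
  have hxd : x * d ^ m = 1 := by
    rw [hx, ← mul_pow, one_div, inv_mul_cancel₀ hd0.ne', one_pow]
  have h1 : d ^ 2 / (N : ℝ) ≤ d ^ (n + 1) := by
    have e1 : d ^ (n + 1) = d ^ 2 * d ^ m := by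
      rw [← pow_add]
      congr 1
      omega
    calc d ^ 2 / (N : ℝ) ≤ d ^ 2 / x :=
          div_le_div_of_nonneg_left (by positivity) hx0 hNx
      _ = d ^ 2 * d ^ m := by
          rw [div_eq_iff hx0.ne', mul_assoc, mul_comm (d ^ m) x, hxd, mul_one]
      _ = d ^ (n + 1) := e1.symm
  have h2 : (N : ℝ) * d ^ (2 * n) ≤ 2 * d ^ (n + 1) := by
    have e1 : d ^ (2 * n) = d ^ (n + 1) * d ^ m := by
      rw [← pow_add]
      congr 1
      omega
    calc (N : ℝ) * d ^ (2 * n) ≤ 2 * x * d ^ (2 * n) := by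
          apply mul_le_mul_of_nonneg_right hN2x (by positivity)
      _ = 2 * d ^ (n + 1) * (x * d ^ m) := by rw [e1]; ring
      _ = 2 * d ^ (n + 1) := by rw [hxd, mul_one]
  have hexpand : (N : ℝ) * (C * ((d / N) ^ 2 + C₁ * d ^ (2 * n) + C₁ * d ^ (2 * n)))
      = C * (d ^ 2 / N) + 2 * C * C₁ * ((N : ℝ) * d ^ (2 * n)) := by
    field_simp
    ring
  have hdp : (0 : ℝ) ≤ d ^ (n + 1) := by positivity
  calc |g z - g z'| ≤ (N : ℝ) * (C * ((d / N) ^ 2 + C₁ * d ^ (2 * n) + C₁ * d ^ (2 * n))) := hsum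
    _ = C * (d ^ 2 / N) + 2 * C * C₁ * ((N : ℝ) * d ^ (2 * n)) := hexpand
    _ ≤ 2 * C * (1 + 2 * C₁) * d ^ (n + 1) := by nlinarith [mul_le_mul_of_nonneg_left h1 hC.le, mul_le_mul_of_nonneg_left h2 (by positivity : (0:ℝ) ≤ 2 * C * C₁)]
end

section
/- Let X be a metric space, let γ : X → X be a surjective isometry, let L > 0, and let c, c₁ : ℝ → X be geodesic lines with γ(c(t)) = c(t + L) and γ(c₁(t)) = c₁(t + L) for all t ∈ ℝ. Let b : X → ℝ be the Busemann function of c (i.e. d(x, c(t)) − t → b(x) as t → +∞ for every x). Then b decays at unit rate along c₁: b(c₁(t + s)) = b(c₁(t)) − s for all t, s ∈ ℝ. -/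
open Filter

/-- Lemma 2.3(2): if `c` and `c₁` are axes of the same surjective isometry `γ`, translated by
the same amount `L > 0`, then the Busemann function of `c` decays at unit rate along `c₁`. -/
theorem busemann_unit_decay_along_axis (X : Type*) [MetricSpace X]
    (γ : X ≃ᵢ X) (L : ℝ) (hL : 0 < L) (c c₁ : ℝ → X)
    (hc : ∀ s t : ℝ, dist (c s) (c t) = |s - t|)
    (hc₁ : ∀ s t : ℝ, dist (c₁ s) (c₁ t) = |s - t|)
    (hγc : ∀ t : ℝ, γ (c t) = c (t + L))
    (hγc₁ : ∀ t : ℝ, γ (c₁ t) = c₁ (t + L))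
    (b : X → ℝ)
    (hb : ∀ x : X, Tendsto (fun t : ℝ => dist x (c t) - t) atTop (nhds (b x))) :
    ∀ t s : ℝ, b (c₁ (t + s)) = b (c₁ t) - s := by
  -- b is 1-Lipschitz
  have hlip : ∀ x y : X, b x - b y ≤ dist x y := by
    intro x y
    have h : Tendsto (fun t : ℝ => (dist x (c t) - t) - (dist y (c t) - t)) atTop
        (nhds (b x - b y)) := (hb x).sub (hb y)
    refine le_of_tendsto h (Eventually.of_forall fun t => ?_)
    have := dist_triangle x y (c t)
    linarith
  -- b (γ x) = b x - L
  have hshift : ∀ x : X, b (γ x) = b x - L := by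
    intro x
    have key : ∀ t : ℝ, dist (γ x) (c t) - t = (dist x (c (t - L)) - (t - L)) - L := by
      intro t
      have : γ (c (t - L)) = c t := by rw [hγc (t - L)]; ring_nf
      rw [← this, γ.isometry.dist_eq]
      ring
    have h1 : Tendsto (fun t : ℝ => (dist x (c (t - L)) - (t - L)) - L) atTop
        (nhds (b x - L)) := by
      have hc' : Tendsto (fun t : ℝ => t - L) atTop atTop :=
        tendsto_atTop_add_const_right _ (-L) tendsto_id
      exact ((hb x).comp hc').sub_const L
    have h2 : Tendsto (fun t : ℝ => dist (γ x) (c t) - t) atTop (nhds (b x - L)) := by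
      simpa only [key] using h1
    exact tendsto_nhds_unique (hb (γ x)) h2
  -- f u := b (c₁ u) + u is nondecreasing
  have hmono : ∀ u v : ℝ, u ≤ v → b (c₁ u) + u ≤ b (c₁ v) + v := by
    intro u v huv
    have := hlip (c₁ u) (c₁ v)
    rw [hc₁ u v, abs_of_nonpos (by linarith)] at this
    linarith
  -- f is L-periodic
  have hper : ∀ u : ℝ, b (c₁ (u + L)) + (u + L) = b (c₁ u) + u := by
    intro u
    rw [← hγc₁ u, hshift]
    ring
  have hpern : ∀ n : ℕ, ∀ u : ℝ, b (c₁ (u + n * L)) + (u + n * L) = b (c₁ u) + u := by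
    intro n
    induction n with
    | zero => intro u; simp
    | succ k ih =>
      intro u
      have h1 := hper (u + k * L)
      have h2 := ih u
      have : u + (k + 1 : ℕ) * L = u + k * L + L := by push_cast; ring
      rw [this]
      linarith
  -- f is constant
  have hconst : ∀ u v : ℝ, u ≤ v → b (c₁ u) + u = b (c₁ v) + v := by
    intro u v huv
    obtain ⟨n, hn⟩ := exists_nat_gt ((v - u) / L)
    have hvn : v ≤ u + n * L := by
      have := (div_lt_iff₀ hL).mp hn
      linarith
    have h1 := hmono u v huv
    have h2 := hmono v (u + n * L) hvn
    have h3 := hpern n u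
    linarith
  intro t s
  rcases le_total (t + s) t with h | h
  · have := hconst (t + s) t h; linarith
  · have := hconst t (t + s) h; linarith
end

section
/- Let X be a metric space, let c, c₁ : ℝ → X be geodesic lines, and let b, b₁ : X → ℝ be their Busemann functions (i.e. d(x, c(t)) − t → b(x) and d(x, c₁(t)) − t → b₁(x) as t → +∞, for every x). Suppose that b(c₁(t)) = −t for all t ∈ ℝ. Then b(x) ≤ b₁(x) for all x ∈ X. -/
open Filter

/-- Comparison of Busemann functions: if the Busemann function `b` of `c` satisfies
`b (c₁ t) = −t` along another geodesic line `c₁` with Busemann function `b₁`, then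
`b ≤ b₁` everywhere. -/
theorem busemann_comparison (X : Type*) [MetricSpace X] (c c₁ : ℝ → X) (b b₁ : X → ℝ)
    (hc : ∀ s t : ℝ, dist (c s) (c t) = |s - t|)
    (hc₁ : ∀ s t : ℝ, dist (c₁ s) (c₁ t) = |s - t|)
    (hb : ∀ x : X, Tendsto (fun t : ℝ => dist x (c t) - t) atTop (nhds (b x)))
    (hb₁ : ∀ x : X, Tendsto (fun t : ℝ => dist x (c₁ t) - t) atTop (nhds (b₁ x)))
    (hbc₁ : ∀ t : ℝ, b (c₁ t) = -t) :
    ∀ x : X, b x ≤ b₁ x := by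
  -- The function t ↦ dist y (c t) - t is antitone, hence its limit `b y` is a lower bound.
  have key : ∀ (y : X) (t : ℝ), b y ≤ dist y (c t) - t := by
    intro y t
    apply le_of_tendsto (hb y)
    filter_upwards [eventually_ge_atTop t] with s hs
    have htri : dist y (c s) ≤ dist y (c t) + dist (c t) (c s) := dist_triangle _ _ _
    have : dist (c t) (c s) = s - t := by
      rw [hc t s, abs_sub_comm, abs_of_nonneg (by linarith)]
    linarith
  intro x
  -- For each t₁, b x ≤ dist x (c₁ t₁) - t₁.
  have key2 : ∀ t₁ : ℝ, b x ≤ dist x (c₁ t₁) - t₁ := by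
    intro t₁
    have h1 : b x - dist x (c₁ t₁) ≤ b (c₁ t₁) := by
      apply ge_of_tendsto (hb (c₁ t₁))
      filter_upwards with t₀
      have := key x t₀
      have htri : dist x (c t₀) ≤ dist x (c₁ t₁) + dist (c₁ t₁) (c t₀) := dist_triangle _ _ _
      linarith
    rw [hbc₁ t₁] at h1
    linarith
  apply ge_of_tendsto (hb₁ x)
  filter_upwards with t using key2 t
end

section
/- Let X be a metric space, let γ : X → X be a surjective isometry, let L > 0, and let c, c₁ : ℝ → X be geodesic lines with γ(c(t)) = c(t + L) and γ(c₁(t)) = c₁(t + L) for all t ∈ ℝ. Let b, b⁻ and b₁ be the Busemann functions of c, of the reversed line t ↦ c(−t), and of c₁ respectively. Suppose that b(c₁(t)) + b⁻(c₁(t)) = 0 for all t ∈ ℝ. Then b − b₁ is constant on X: there is K ∈ ℝ with b(x) − b₁(x) = K for all x ∈ X. -/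
open Filter

/-- Proposition 3.1 (metric-space content): if `c` and `c₁` are axes of the same surjective
isometry `γ` translated by the same `L > 0`, and the sum of the Busemann functions of `c` and
of its reverse vanishes along `c₁`, then the difference of the Busemann functions of `c` and
`c₁` is constant. -/
theorem busemann_difference_constant (X : Type*) [MetricSpace X]
    (γ : X ≃ᵢ X) (L : ℝ) (hL : 0 < L) (c c₁ : ℝ → X)
    (hc : ∀ s t : ℝ, dist (c s) (c t) = |s - t|)
    (hc₁ : ∀ s t : ℝ, dist (c₁ s) (c₁ t) = |s - t|)
    (hγc : ∀ t : ℝ, γ (c t) = c (t + L))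
    (hγc₁ : ∀ t : ℝ, γ (c₁ t) = c₁ (t + L))
    (b bminus b₁ : X → ℝ)
    (hb : ∀ x : X, Tendsto (fun t : ℝ => dist x (c t) - t) atTop (nhds (b x)))
    (hbminus : ∀ x : X, Tendsto (fun t : ℝ => dist x (c (-t)) - t) atTop (nhds (bminus x)))
    (hb₁ : ∀ x : X, Tendsto (fun t : ℝ => dist x (c₁ t) - t) atTop (nhds (b₁ x)))
    (hzero : ∀ t : ℝ, b (c₁ t) + bminus (c₁ t) = 0) :
    ∃ K : ℝ, ∀ x : X, b x - b₁ x = K := by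
  -- b is 1-Lipschitz
  have hblip : ∀ x y : X, b x ≤ dist x y + b y := by
    intro x y
    refine le_of_tendsto_of_tendsto' (hb x) (tendsto_const_nhds.add (hb y)) ?_
    intro t
    have := dist_triangle x y (c t)
    linarith
  -- b₁ x ≤ dist x (c₁ u) - u for every u
  have hb₁le : ∀ (x : X) (u : ℝ), b₁ x ≤ dist x (c₁ u) - u := by
    intro x u
    refine le_of_tendsto (hb₁ x) ?_
    filter_upwards [eventually_ge_atTop u] with t ht
    have h1 := dist_triangle x (c₁ u) (c₁ t)
    have h2 : dist (c₁ u) (c₁ t) = t - u := by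
      rw [hc₁, abs_of_nonpos (by linarith)]; ring
    linarith
  -- b ∘ γ = b - L
  have hbγ : ∀ x : X, b (γ x) = b x - L := by
    intro x
    have h1 : Tendsto (fun t : ℝ => t - L) atTop atTop := by
      simpa [sub_eq_add_neg] using tendsto_atTop_add_const_right atTop (-L) tendsto_id
    have h2 := ((hb x).comp h1).sub_const L
    refine tendsto_nhds_unique (hb (γ x)) (h2.congr fun t => ?_)
    have hγ : γ (c (t - L)) = c t := by
      have := hγc (t - L); rwa [sub_add_cancel] at this
    have : dist (γ x) (c t) = dist x (c (t - L)) := by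
      rw [← hγ, γ.dist_eq]
    simp only [Function.comp]
    rw [this]; ring
  set a : ℝ := b (c₁ 0) with ha
  -- b (c₁ t) = a - t
  have hstep : ∀ t : ℝ, b (c₁ (t + L)) = b (c₁ t) - L := by
    intro t; rw [← hγc₁ t, hbγ]
  have hper : ∀ (n : ℕ) (t : ℝ), b (c₁ (t + n * L)) = b (c₁ t) - n * L := by
    intro n
    induction n with
    | zero => intro t; simp
    | succ n ih =>
      intro t
      have : t + (n + 1 : ℕ) * L = (t + n * L) + L := by push_cast; ring
      rw [this, hstep, ih]
      push_cast; ring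
  have hmono : ∀ s t : ℝ, s ≤ t → b (c₁ s) + s ≤ b (c₁ t) + t := by
    intro s t hst
    have h1 := hblip (c₁ s) (c₁ t)
    have h2 : dist (c₁ s) (c₁ t) = t - s := by
      rw [hc₁, abs_of_nonpos (by linarith)]; ring
    linarith
  have hbc₁ : ∀ t : ℝ, b (c₁ t) = a - t := by
    intro t
    obtain ⟨n, hn⟩ := exists_nat_ge (|t| / L)
    have hnL : |t| ≤ n * L := by
      rw [div_le_iff₀ hL] at hn; linarith
    have h1 : t ≤ n * L := le_trans (le_abs_self t) hnL
    have h2 : -(n * L) ≤ t := by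
      have := neg_abs_le t; linarith
    have hup : b (c₁ t) + t ≤ a := by
      have := hmono t (n * L) h1
      have hp := hper n 0
      simp at hp
      linarith
    have hlo : a ≤ b (c₁ t) + t := by
      have := hmono (-(n * L)) t h2
      have hp := hper n (-(n * L))
      simp at hp
      linarith
    linarith
  have hbmc₁ : ∀ t : ℝ, bminus (c₁ t) = t - a := by
    intro t
    have := hzero t
    rw [hbc₁ t] at this
    linarith
  -- easy direction : b x - a ≤ b₁ x
  have heasy : ∀ x : X, b x - a ≤ b₁ x := by
    intro x
    have key : ∀ t : ℝ, b x - a ≤ dist x (c₁ t) - t := by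
      intro t
      have hbd : b x ≤ dist x (c₁ t) + b (c₁ t) := by
        refine le_of_tendsto_of_tendsto' (hb x) (tendsto_const_nhds.add (hb (c₁ t))) ?_
        intro s
        have := dist_triangle x (c₁ t) (c s)
        linarith
      rw [hbc₁ t] at hbd
      linarith
    refine ge_of_tendsto' (hb₁ x) fun t => key t
  -- shift lemma for distances
  have hshift1 : ∀ v w : ℝ, dist (c v) (c₁ w) = dist (c (v - L)) (c₁ (w - L)) := by
    intro v w
    have h1 : γ (c (v - L)) = c v := by
      have := hγc (v - L); rwa [sub_add_cancel] at this
    have h2 : γ (c₁ (w - L)) = c₁ w := by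
      have := hγc₁ (w - L); rwa [sub_add_cancel] at this
    rw [← h1, ← h2, γ.dist_eq]
  have hshift : ∀ (n : ℕ) (v w : ℝ),
      dist (c v) (c₁ w) = dist (c (v - n * L)) (c₁ (w - n * L)) := by
    intro n
    induction n with
    | zero => intro v w; simp
    | succ n ih =>
      intro v w
      rw [ih v w, hshift1 (v - n * L) (w - n * L)]
      have e1 : v - n * L - L = v - (n + 1 : ℕ) * L := by push_cast; ring
      have e2 : w - n * L - L = w - (n + 1 : ℕ) * L := by push_cast; ring
      rw [e1, e2]
  -- hard direction : b₁ x + a ≤ b x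
  have hhard : ∀ x : X, b₁ x + a ≤ b x := by
    intro x
    have key : ∀ s : ℝ, b₁ x + a ≤ dist x (c s) - s := by
      intro s
      have hn : ∀ n : ℕ, b₁ x ≤ (dist x (c s) - s) + (dist (c (s - n * L)) (c₁ s) - n * L) := by
        intro n
        have h1 := hb₁le x (s + n * L)
        have h2 := dist_triangle x (c s) (c₁ (s + n * L))
        have h3 : dist (c s) (c₁ (s + n * L)) = dist (c (s - n * L)) (c₁ s) := by
          have := hshift n s (s + n * L)
          simpa using this
        linarith
      have ht : Tendsto (fun n : ℕ => (n : ℝ) * L - s) atTop atTop := by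
        have h0 : Tendsto (fun n : ℕ => (n : ℝ) * L) atTop atTop :=
          Tendsto.atTop_mul_const hL tendsto_natCast_atTop_atTop
        simpa [sub_eq_add_neg] using tendsto_atTop_add_const_right atTop (-s) h0
      have hlim0 := ((hbminus (c₁ s)).comp ht).sub_const s
      have hlim : Tendsto
          (fun n : ℕ => (dist x (c s) - s) + (dist (c (s - n * L)) (c₁ s) - n * L)) atTop
          (nhds ((dist x (c s) - s) + (-a))) := by
        refine tendsto_const_nhds.add ?_
        have heq : ∀ n : ℕ,
            (dist (c₁ s) (c (-((n : ℝ) * L - s))) - ((n : ℝ) * L - s)) - s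
              = dist (c (s - n * L)) (c₁ s) - n * L := by
          intro n
          rw [dist_comm]
          have : -((n : ℝ) * L - s) = s - n * L := by ring
          rw [this]; ring
        have hval : bminus (c₁ s) - s = -a := by rw [hbmc₁ s]; ring
        rw [← hval]
        exact hlim0.congr heq
      have := ge_of_tendsto' hlim hn
      linarith
    have := ge_of_tendsto' (hb x) key
    linarith
  exact ⟨a, fun x => by have := heasy x; have := hhard x; linarith⟩
end
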